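/- With notation as in the Fock-space setting, the fifth iterated commutator is linear in creation/annihilation operators: [A,[A,[A,[A,[A,V]]]]] = 360 ∫ v₃(x−y,x−z) |φ(x)|² |φ(y)|² ( φ̄(z) a_z + φ(z) a*_z ) dx dy dz. -/

import Mathlib

/-!
Commutation with `A` is a derivation sending every `a_x` and `a*_x` to a scalar, so each of the
five commutators must strike one of the six factors of `a*_x a*_y a*_z a_x a_y a_z` (striking
the scalar left behind gives zero). The `5!` orders of striking five factors leave one operator,
whose coefficient pairs the surviving conjugate factors into `|φ|²` weights; the symmetry of `v₃`
then merges the three possible positions of the survivor, giving `3 · 5! = 360`.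
-/

open Finset

section Commutator

-- Kept local: globally it would change the bracket instance the final statement elaborates to.
attribute [local instance 100] LieRing.ofAssociativeRing

theorem Ring.lie_mul {𝒜 : Type*} [Ring 𝒜] (A x y : 𝒜) :
    ⁅A, x * y⁆ = ⁅A, x⁆ * y + x * ⁅A, y⁆ := by
  simp only [Ring.lie_def]
  noncomm_ring

theorem lie_lie_lie_lie_lie_mul_of_lie_eq_smul_one {R 𝒜 : Type*} [CommRing R] [Ring 𝒜]
    [Algebra R 𝒜] (A u₁ u₂ u₃ u₄ u₅ u₆ : 𝒜) (c₁ c₂ c₃ c₄ c₅ c₆ : R)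
    (h₁ : ⁅A, u₁⁆ = c₁ • 1) (h₂ : ⁅A, u₂⁆ = c₂ • 1) (h₃ : ⁅A, u₃⁆ = c₃ • 1)
    (h₄ : ⁅A, u₄⁆ = c₄ • 1) (h₅ : ⁅A, u₅⁆ = c₅ • 1) (h₆ : ⁅A, u₆⁆ = c₆ • 1) :
    ⁅A, ⁅A, ⁅A, ⁅A, ⁅A, u₁ * u₂ * u₃ * (u₄ * u₅ * u₆)⁆⁆⁆⁆⁆ =
      (120 : R) • ((c₂ * c₃ * c₄ * c₅ * c₆) • u₁ + (c₁ * c₃ * c₄ * c₅ * c₆) • u₂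
        + (c₁ * c₂ * c₄ * c₅ * c₆) • u₃ + (c₁ * c₂ * c₃ * c₅ * c₆) • u₄
        + (c₁ * c₂ * c₃ * c₄ * c₆) • u₅ + (c₁ * c₂ * c₃ * c₄ * c₅) • u₆) := by
  -- `simp` does not find `lie_smul` through the instance path over a general `R`.
  have lie_smul' : ∀ (c : R) (u : 𝒜), ⁅A, c • u⁆ = c • ⁅A, u⁆ := fun c u => lie_smul c A u
  simp only [Ring.lie_mul, h₁, h₂, h₃, h₄, h₅, h₆, smul_mul_assoc, mul_smul_comm, one_mul,
    mul_one, add_mul, mul_add, lie_add, lie_smul', smul_add, smul_smul]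
  module

theorem sum_sum_sum_smul_add_add_eq_three_smul_of_symm {ι R M : Type*} [Fintype ι]
    [Semiring R] [AddCommMonoid M] [Module R M] (v : ι → ι → ι → R)
    (hsym1 : ∀ x y z, v x y z = v y x z) (hsym2 : ∀ x y z, v x y z = v x z y)
    (F : ι → ι → ι → M) :
    ∑ x, ∑ y, ∑ z, v x y z • (F y z x + F x z y + F x y z) =
      3 • ∑ x, ∑ y, ∑ z, v x y z • F x y z := by
  have rotate : ∑ x, ∑ y, ∑ z, v x y z • F y z x = ∑ x, ∑ y, ∑ z, v x y z • F x y z :=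
    calc ∑ x, ∑ y, ∑ z, v x y z • F y z x = ∑ x, ∑ y, ∑ z, v y z x • F y z x := by
          simp only [hsym1 _ _ _, hsym2 _ _ _]
      _ = ∑ y, ∑ z, ∑ x, v y z x • F y z x := by
          rw [sum_comm]
          exact sum_congr rfl fun _ _ => sum_comm
  have swap : ∑ x, ∑ y, ∑ z, v x y z • F x z y = ∑ x, ∑ y, ∑ z, v x y z • F x y z :=
    calc ∑ x, ∑ y, ∑ z, v x y z • F x z y = ∑ x, ∑ y, ∑ z, v x z y • F x z y := by
          simp only [hsym2 _ _ _]
      _ = _ := sum_congr rfl fun _ _ => sum_comm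
  simp only [smul_add, sum_add_distrib, rotate, swap]
  abel

section CCR

variable {𝒜 : Type*} [Ring 𝒜] [Algebra ℂ 𝒜] {ι : Type*} (a astar : ι → 𝒜) (φ : ι → ℂ)

noncomputable def contractedTerm (x y z : ι) : 𝒜 :=
  (((‖φ x‖ ^ 2 : ℝ) : ℂ) * ((‖φ y‖ ^ 2 : ℝ) : ℂ)) •
    ((starRingEnd ℂ) (φ z) • a z + φ z • astar z)

theorem lie_five_cubic_monomial (A : 𝒜) (hAa : ∀ w, ⁅A, a w⁆ = φ w • 1)
    (hAs : ∀ w, ⁅A, astar w⁆ = (starRingEnd ℂ) (φ w) • 1) (x y z : ι) :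
    ⁅A, ⁅A, ⁅A, ⁅A, ⁅A, astar x * astar y * astar z * (a x * a y * a z)⁆⁆⁆⁆⁆ =
      (120 : ℂ) • (contractedTerm a astar φ y z x + contractedTerm a astar φ x z y +
        contractedTerm a astar φ x y z) := by
  rw [lie_lie_lie_lie_lie_mul_of_lie_eq_smul_one A _ _ _ _ _ _ _ _ _ _ _ _
    (hAs x) (hAs y) (hAs z) (hAa x) (hAa y) (hAa z)]
  simp only [contractedTerm]
  push_cast
  simp only [← Complex.conj_mul']
  module

variable [Fintype ι] [DecidableEq ι]

theorem ccr_lie_annihilation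
    (hCCR : ∀ x y, a x * astar y - astar y * a x = if x = y then 1 else 0)
    (haa : ∀ x y, a x * a y = a y * a x) (w : ι) :
    ⁅∑ x, ((starRingEnd ℂ) (φ x) • a x - φ x • astar x), a w⁆ = φ w • 1 := by
  have ha : ∀ x, ⁅a x, a w⁆ = 0 := fun x => by rw [Ring.lie_def, haa, sub_self]
  have hs : ∀ x, ⁅astar x, a w⁆ = -(if w = x then 1 else 0) := fun x => by
    rw [Ring.lie_def, ← hCCR, neg_sub]
  simp [sum_lie, sub_lie, smul_lie, ha, hs]

theorem ccr_lie_creation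
    (hCCR : ∀ x y, a x * astar y - astar y * a x = if x = y then 1 else 0)
    (hss : ∀ x y, astar x * astar y = astar y * astar x) (w : ι) :
    ⁅∑ x, ((starRingEnd ℂ) (φ x) • a x - φ x • astar x), astar w⁆ =
      (starRingEnd ℂ) (φ w) • 1 := by
  have ha : ∀ x, ⁅a x, astar w⁆ = if x = w then 1 else 0 := fun x => by rw [Ring.lie_def, hCCR]
  have hs : ∀ x, ⁅astar x, astar w⁆ = 0 := fun x => by rw [Ring.lie_def, hss, sub_self]
  simp [sum_lie, sub_lie, smul_lie, ha, hs]

end CCR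

end Commutator

/-- Fock-space commutator computation (discrete form of the CCR algebra):
with `A = Σ (φ̄(x) a_x − φ(x) a*_x)` and
`V = Σ v₃(x,y,z) a*_x a*_y a*_z a_x a_y a_z` for a symmetric `v₃`, the fifth
iterated commutator is linear in creation/annihilation operators:
`[A,[A,[A,[A,[A,V]]]]] = 360 Σ v₃(x,y,z) |φ(x)|²|φ(y)|² (φ̄(z) a_z + φ(z) a*_z)`. -/
theorem fivefold_commutator_is_linear
    {𝒜 : Type*} [Ring 𝒜] [Algebra ℂ 𝒜]
    {ι : Type*} [Fintype ι] [DecidableEq ι]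
    (a astar : ι → 𝒜)
    -- canonical commutation relations
    (hCCR : ∀ x y, a x * astar y - astar y * a x = if x = y then 1 else 0)
    (haa : ∀ x y, a x * a y = a y * a x)
    (hss : ∀ x y, astar x * astar y = astar y * astar x)
    (φ : ι → ℂ) (v₃ : ι → ι → ι → ℝ)
    -- `v₃` is symmetric under permutations of its three arguments
    (hsym1 : ∀ x y z, v₃ x y z = v₃ y x z)
    (hsym2 : ∀ x y z, v₃ x y z = v₃ x z y)
    (A V : 𝒜)
    (hA : A = ∑ x, ((starRingEnd ℂ) (φ x) • a x - φ x • astar x))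
    (hV : V = ∑ x, ∑ y, ∑ z,
      (v₃ x y z : ℂ) • (astar x * astar y * astar z * (a x * a y * a z))) :
    ⁅A, ⁅A, ⁅A, ⁅A, ⁅A, V⁆⁆⁆⁆⁆ =
      (360 : ℂ) • ∑ x, ∑ y, ∑ z,
        ((v₃ x y z : ℂ) * (‖φ x‖ ^ 2 : ℝ) * (‖φ y‖ ^ 2 : ℝ)) •
          ((starRingEnd ℂ) (φ z) • a z + φ z • astar z) := by
  let : LieRing 𝒜 := LieRing.ofAssociativeRing
  have hAa : ∀ w, ⁅A, a w⁆ = φ w • 1 := hA ▸ ccr_lie_annihilation a astar φ hCCR haa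
  have hAs : ∀ w, ⁅A, astar w⁆ = (starRingEnd ℂ) (φ w) • 1 :=
    hA ▸ ccr_lie_creation a astar φ hCCR hss
  have hv₁ : ∀ x y z, (v₃ x y z : ℂ) = v₃ y x z := fun x y z => by rw [hsym1]
  have hv₂ : ∀ x y z, (v₃ x y z : ℂ) = v₃ x z y := fun x y z => by rw [hsym2]
  subst hV
  simp only [lie_sum, lie_smul, lie_five_cubic_monomial a astar φ A hAa hAs,
    smul_comm _ (120 : ℂ), ← smul_sum, sum_sum_sum_smul_add_add_eq_three_smul_of_symm _ hv₁ hv₂]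
  simp only [contractedTerm, smul_smul, ← mul_assoc]
  module
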